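/- arXiv:2503.13675 — 4 statements merged into one kernel-verified Lean document; each statement's English description precedes it below -/
import Mathlib

section
/- Let A ∈ ℝ^{n_x×n_x} be invertible, B ∈ ℝ^{n_x×n_u}, S ∈ ℝ^{n_x×n_x} symmetric positive definite, L ∈ ℝ^{n_u×n_x}, Y ∈ ℝ^{n_u×n_u} symmetric, R ∈ ℝ^{n_u×n_u} symmetric positive definite, and ρ > 0 a real number. Suppose there exist a symmetric matrix Λ ∈ ℝ^{n_x×n_x} and a symmetric positive semidefinite matrix M ∈ ℝ^{n_u×n_u} satisfying the KKT stationarity conditions ρ·BᵀΛA + M L S⁻¹ = 0 and ρ·R − M + ρ·BᵀΛB = 0, and the complementary slackness condition Tr(M C) = 0, where C := L S⁻¹ Lᵀ − Y is negative semidefinite. Then C = 0, i.e., Y = L S⁻¹ Lᵀ (the convex relaxation Y ⪰ L S⁻¹ Lᵀ is lossless at any KKT point). -/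
/-!
Multiplying the first stationarity condition on the right by `A⁻¹B` eliminates `Λ` from the
second one and leaves `M (I + L S⁻¹ A⁻¹ B) = ρ R`. The right-hand side is invertible, so `M` is
invertible and hence positive definite. Complementary slackness `Tr(M (-C)) = 0` with `M ≻ 0` and
`-C ⪰ 0` then forces `C = 0`: conjugating by `√M` turns `M (-C)` into the positive semidefinite
matrix `√M (-C) √M` of zero trace.
-/

open Matrix
open scoped ComplexOrder

namespace Matrix

variable {n 𝕜 : Type*} [Fintype n] [DecidableEq n] [RCLike 𝕜]

open scoped MatrixOrder in
theorem PosSemidef.eq_zero_of_trace_mul_eq_zero {M P : Matrix n n 𝕜} (hM : M.PosDef)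
    (hP : P.PosSemidef) (h : (M * P).trace = 0) : P = 0 := by
  set T := CFC.sqrt M
  have hTT : T * T = M := CFC.sqrt_mul_sqrt_self M hM.posSemidef.nonneg
  have hT : IsUnit T := isUnit_of_mul_isUnit_left (by rw [hTT]; exact hM.isUnit)
  have hTstar : star T = T := (CFC.sqrt_nonneg M).isSelfAdjoint
  have hTPT : (T * P * star T).PosSemidef := hT.posSemidef_star_right_conjugate_iff.mpr hP
  have htrace : (T * P * star T).trace = 0 := by
    rw [hTstar, trace_mul_cycle, hTT, h]
  have hTPT_zero := hTPT.trace_eq_zero_iff.mp htrace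
  rwa [hTstar, hT.mul_left_eq_zero, hT.mul_right_eq_zero] at hTPT_zero

end Matrix

theorem mul_one_add_eq_smul_of_stationarity {m n α : Type*} [Fintype m] [DecidableEq m]
    [Fintype n] [DecidableEq n] [CommRing α] {A : Matrix m m α} (hA : IsUnit A.det)
    {B : Matrix m n α} {N G : Matrix n m α} {R M : Matrix n n α} {ρ : α}
    (h₁ : ρ • (N * A) + M * G = 0) (h₂ : ρ • R - M + ρ • (N * B) = 0) :
    M * (1 + G * (A⁻¹ * B)) = ρ • R := by
  have h₁B : ρ • (N * B) + M * (G * (A⁻¹ * B)) = 0 := by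
    simpa only [Matrix.add_mul, Matrix.smul_mul, Matrix.zero_mul, Matrix.mul_assoc,
      mul_nonsing_inv_cancel_left A B hA] using congrArg (· * (A⁻¹ * B)) h₁
  rw [mul_add, mul_one]
  linear_combination (norm := abel) h₁B - h₂

theorem stmt_2_general {nx nu : ℕ}
    (A : Matrix (Fin nx) (Fin nx) ℝ) (hA : IsUnit A.det)
    (B : Matrix (Fin nx) (Fin nu) ℝ)
    (S : Matrix (Fin nx) (Fin nx) ℝ)
    (L : Matrix (Fin nu) (Fin nx) ℝ)
    (Y : Matrix (Fin nu) (Fin nu) ℝ)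
    (R : Matrix (Fin nu) (Fin nu) ℝ) (hR : R.PosDef)
    (ρ : ℝ) (hρ : 0 < ρ)
    (Λ : Matrix (Fin nx) (Fin nx) ℝ)
    (M : Matrix (Fin nu) (Fin nu) ℝ) (hM : M.PosSemidef)
    (hstat1 : ρ • (Bᵀ * Λ * A) + M * L * S⁻¹ = 0)
    (hstat2 : ρ • R - M + ρ • (Bᵀ * Λ * B) = 0)
    (hCnsd : (-(L * S⁻¹ * Lᵀ - Y)).PosSemidef)
    (hcs : (M * (L * S⁻¹ * Lᵀ - Y)).trace = 0) :
    L * S⁻¹ * Lᵀ - Y = 0 := by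
  have hMR : M * (1 + L * S⁻¹ * (A⁻¹ * B)) = ρ • R :=
    mul_one_add_eq_smul_of_stationarity hA (by rwa [← Matrix.mul_assoc M]) hstat2
  have hMpd : M.PosDef := by
    have hdet : (M * (1 + L * S⁻¹ * (A⁻¹ * B))).det ≠ 0 := by
      rw [hMR, det_smul]
      exact mul_ne_zero (pow_ne_zero _ hρ.ne') hR.det_pos.ne'
    rw [det_mul] at hdet
    exact hM.posDef_iff_det_ne_zero.mpr (left_ne_zero_of_mul hdet)
  refine neg_eq_zero.mp (hCnsd.eq_zero_of_trace_mul_eq_zero hMpd ?_)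
  rw [mul_neg, trace_neg, hcs, neg_zero]

/-- algebraic core of Theorem 1: losslessness of the convex relaxation
in the unconstrained MJLS covariance-steering subproblem. Given the KKT stationarity
conditions `ρ·BᵀΛA + M L S⁻¹ = 0` and `ρ·R − M + ρ·BᵀΛB = 0`, the complementary
slackness condition `Tr(M C) = 0` with `C := L S⁻¹ Lᵀ − Y ⪯ 0` and `M ⪰ 0`,
one has `C = 0`, i.e. `Y = L S⁻¹ Lᵀ`. -/
theorem stmt_2 {nx nu : ℕ}
    (A : Matrix (Fin nx) (Fin nx) ℝ) (hA : IsUnit A.det)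
    (B : Matrix (Fin nx) (Fin nu) ℝ)
    (S : Matrix (Fin nx) (Fin nx) ℝ) (hSsymm : S.IsSymm) (hS : S.PosDef)
    (L : Matrix (Fin nu) (Fin nx) ℝ)
    (Y : Matrix (Fin nu) (Fin nu) ℝ) (hY : Y.IsSymm)
    (R : Matrix (Fin nu) (Fin nu) ℝ) (hRsymm : R.IsSymm) (hR : R.PosDef)
    (ρ : ℝ) (hρ : 0 < ρ)
    (Λ : Matrix (Fin nx) (Fin nx) ℝ) (hΛ : Λ.IsSymm)
    (M : Matrix (Fin nu) (Fin nu) ℝ) (hMsymm : M.IsSymm) (hM : M.PosSemidef)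
    (hstat1 : ρ • (Bᵀ * Λ * A) + M * L * S⁻¹ = 0)
    (hstat2 : ρ • R - M + ρ • (Bᵀ * Λ * B) = 0)
    (hCnsd : (-(L * S⁻¹ * Lᵀ - Y)).PosSemidef)
    (hcs : (M * (L * S⁻¹ * Lᵀ - Y)).trace = 0) :
    L * S⁻¹ * Lᵀ - Y = 0 :=
  stmt_2_general A hA B S L Y R hR ρ hρ Λ M hM hstat1 hstat2 hCnsd hcs
end

section
/- Let J be a finite index set, a_j ∈ ℝⁿ and b_j ∈ ℝ for each j ∈ J, ε ∈ (0,1), and ε_j ∈ (0,1) for each j with Σ_{j∈J} ε_j ≤ ε. If for every j ∈ J it holds that a_jᵀv̄ + b_j + √(((1−ε_j)/ε_j)·a_jᵀVa_j) ≤ 0, then P(a_jᵀv + b_j ≤ 0 for all j ∈ J) ≥ 1 − ε. -/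
open MeasureTheory Matrix

/-!
Each constraint fails only if the centred variable `a_jᵀ(v - v̄)`, whose variance is `a_jᵀVa_j`,
exceeds `-(a_jᵀv̄ + b_j) ≥ √((1 - ε_j)/ε_j · a_jᵀVa_j)`. Cantelli's inequality
`P(X - E X ≥ t) ≤ σ²/(σ² + t²)`, obtained from Markov's inequality for `(X - E X + σ²/t)²`,
bounds this by `ε_j`, and a union bound over `J` bounds the probability that some constraint fails
by `Σ_j ε_j ≤ ε`.
-/

namespace ProbabilityTheory

variable {Ω : Type*} [MeasurableSpace Ω] {μ : Measure Ω}

section LinearForm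

variable {κ : Type*} [Fintype κ] {v : Ω → κ → ℝ}

noncomputable def covarianceMatrix (v : Ω → κ → ℝ) (μ : Measure Ω) : Matrix κ κ ℝ :=
  Matrix.of fun i j => cov[fun ω => v ω i, fun ω => v ω j; μ]

lemma memLp_dotProduct {p : ENNReal} (hv : ∀ i, MemLp (fun ω => v ω i) p μ) (a : κ → ℝ) :
    MemLp (fun ω => a ⬝ᵥ v ω) p μ :=
  memLp_finsetSum _ fun i _ => (hv i).const_mul (a i)

lemma integral_dotProduct (hv : ∀ i, Integrable (fun ω => v ω i) μ) (a : κ → ℝ) :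
    μ[fun ω => a ⬝ᵥ v ω] = a ⬝ᵥ fun i => μ[fun ω => v ω i] := by
  simp only [dotProduct]
  rw [integral_finsetSum _ fun i _ => (hv i).const_mul (a i)]
  simp only [integral_const_mul]

lemma variance_dotProduct [IsFiniteMeasure μ] (hv : ∀ i, MemLp (fun ω => v ω i) 2 μ)
    (a : κ → ℝ) : Var[fun ω => a ⬝ᵥ v ω; μ] = a ⬝ᵥ (covarianceMatrix v μ *ᵥ a) := by
  rw [← covariance_self (memLp_dotProduct hv a).aemeasurable]
  simp only [dotProduct]
  rw [covariance_fun_sum_fun_sum (fun i => (hv i).const_mul (a i))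
    (fun i => (hv i).const_mul (a i))]
  simp only [covariance_const_mul_left, covariance_const_mul_right, mulVec, dotProduct,
    covarianceMatrix, of_apply, Finset.mul_sum]
  exact Finset.sum_congr rfl fun i _ => Finset.sum_congr rfl fun j _ => by ring

end LinearForm

variable [IsProbabilityMeasure μ] {X : Ω → ℝ}

lemma integral_sub_integral_add_sq (hX : MemLp X 2 μ) (l : ℝ) :
    ∫ ω, (X ω - μ[X] + l) ^ 2 ∂μ = Var[X; μ] + l ^ 2 := by
  have hXint := hX.integrable one_le_two
  have hZ : MemLp (fun ω => X ω - μ[X] + l) 2 μ := (hX.sub (memLp_const _)).add (memLp_const _)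
  have hmean : ∫ ω, (X ω - μ[X] + l) ∂μ = l := by
    rw [integral_add (f := fun ω => X ω - μ[X]) (hXint.sub (integrable_const _))
      (integrable_const l), integral_sub (f := X) hXint (integrable_const _)]
    simp
  have hvar : Var[fun ω => X ω - μ[X] + l; μ] = Var[X; μ] := by
    rw [variance_add_const (X := fun ω => X ω - μ[X]) (hX.1.sub aestronglyMeasurable_const),
      variance_sub_const hX.1]
  have := variance_eq_sub hZ
  rw [hmean, hvar] at this
  simp only [Pi.pow_apply] at this
  linarith

lemma meas_ge_le_variance_add_sq_div_sq (hX : MemLp X 2 μ) {t l : ℝ} (htl : 0 < t + l) :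
    μ {ω | t ≤ X ω - μ[X]} ≤ ENNReal.ofReal ((Var[X; μ] + l ^ 2) / (t + l) ^ 2) := by
  have hsub : {ω | t ≤ X ω - μ[X]} ⊆ {ω | (t + l) ^ 2 ≤ (X ω - μ[X] + l) ^ 2} := fun ω hω =>
    pow_le_pow_left₀ htl.le (by simp only [Set.mem_ofPred_eq] at hω; linarith) 2
  have hint : Integrable (fun ω => (X ω - μ[X] + l) ^ 2) μ :=
    ((hX.sub (memLp_const _)).add (memLp_const _)).integrable_sq
  have hmarkov := mul_meas_ge_le_integral_of_nonneg (f := fun ω => (X ω - μ[X] + l) ^ 2)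
    (Filter.Eventually.of_forall fun ω => sq_nonneg (X ω - μ[X] + l)) hint ((t + l) ^ 2)
  rw [integral_sub_integral_add_sq hX] at hmarkov
  rw [ENNReal.le_ofReal_iff_toReal_le (measure_ne_top _ _)
      (div_nonneg (add_nonneg (variance_nonneg _ _) (sq_nonneg _)) (sq_nonneg _)),
    le_div_iff₀ (pow_pos htl 2), mul_comm]
  exact (mul_le_mul_of_nonneg_left (measureReal_mono hsub) (sq_nonneg _)).trans hmarkov

/-- **Cantelli's inequality** (one-sided Chebyshev). -/
theorem meas_ge_le_variance_div_variance_add_sq (hX : MemLp X 2 μ) {t : ℝ} (ht : 0 < t) :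
    μ {ω | t ≤ X ω - μ[X]} ≤ ENNReal.ofReal (Var[X; μ] / (Var[X; μ] + t ^ 2)) := by
  have hvar := variance_nonneg X μ
  -- the shift `l = Var[X] / t` minimises the Markov bound
  have hopt : (Var[X; μ] + (Var[X; μ] / t) ^ 2) / (t + Var[X; μ] / t) ^ 2
      = Var[X; μ] / (Var[X; μ] + t ^ 2) := by
    have : 0 < Var[X; μ] + t ^ 2 := by positivity
    field_simp
    ring
  rw [← hopt]
  exact meas_ge_le_variance_add_sq_div_sq hX (by positivity)

lemma variance_div_variance_add_sq_le {σ2 t ε : ℝ} (hσ2 : 0 ≤ σ2) (ht : 0 < t) (hε : 0 < ε)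
    (h : √((1 - ε) / ε * σ2) ≤ t) : σ2 / (σ2 + t ^ 2) ≤ ε := by
  rw [Real.sqrt_le_left ht.le, div_mul_eq_mul_div, div_le_iff₀ hε] at h
  rw [div_le_iff₀ (by positivity)]
  linarith

theorem meas_lt_sub_integral_le_of_sqrt_le (hX : MemLp X 2 μ) {ε t : ℝ} (hε : 0 < ε)
    (ht : √((1 - ε) / ε * Var[X; μ]) ≤ t) : μ {ω | t < X ω - μ[X]} ≤ ENNReal.ofReal ε := by
  rcases ((Real.sqrt_nonneg _).trans ht).eq_or_lt with rfl | htpos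
  -- at `t = 0` Cantelli gives nothing, but for `ε < 1` the hypothesis forces `X` to be a.s. constant
  · by_cases hε1 : 1 ≤ ε
    · exact prob_le_one.trans (ENNReal.one_le_ofReal.mpr hε1)
    have hvar : Var[X; μ] = 0 := by
      rw [Real.sqrt_le_left le_rfl] at ht
      have : 0 < (1 - ε) / ε := div_pos (by linarith) hε
      nlinarith [variance_nonneg X μ]
    have hnull : μ {ω | 0 < X ω - μ[X]} = 0 := by
      refine measure_mono_null (fun ω hω => ?_)
        (ae_iff.mp (ae_eq_integral_of_variance_eq_zero hX hvar))
      simp only [Set.mem_ofPred_eq] at hω ⊢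
      linarith
    exact hnull.le.trans zero_le
  · calc μ {ω | t < X ω - μ[X]} ≤ μ {ω | t ≤ X ω - μ[X]} :=
          measure_mono <| Set.ofPred_subset_ofPred.mpr fun _ => le_of_lt
      _ ≤ ENNReal.ofReal (Var[X; μ] / (Var[X; μ] + t ^ 2)) :=
        meas_ge_le_variance_div_variance_add_sq hX htpos
      _ ≤ ENNReal.ofReal ε := ENNReal.ofReal_le_ofReal
        (variance_div_variance_add_sq_le (variance_nonneg X μ) htpos hε ht)

theorem meas_not_add_nonpos_le (hX : MemLp X 2 μ) (b : ℝ) {ε : ℝ} (hε : 0 < ε)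
    (h : μ[X] + b + √((1 - ε) / ε * Var[X; μ]) ≤ 0) :
    μ {ω | ¬ X ω + b ≤ 0} ≤ ENNReal.ofReal ε :=
  (measure_mono fun ω (hω : ¬ X ω + b ≤ 0) => show -(μ[X] + b) < X ω - μ[X] by linarith).trans
    (meas_lt_sub_integral_le_of_sqrt_le hX hε (by linarith))

theorem ofReal_one_sub_le_meas_forall {ι : Type*} {p : ι → Ω → Prop} (J : Finset ι) {ε : ℝ}
    (εj : ι → ℝ) (hε : 0 ≤ ε) (hεj : ∀ j ∈ J, 0 ≤ εj j) (hsum : ∑ j ∈ J, εj j ≤ ε)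
    (hp : ∀ j ∈ J, μ {ω | ¬ p j ω} ≤ ENNReal.ofReal (εj j)) :
    ENNReal.ofReal (1 - ε) ≤ μ {ω | ∀ j ∈ J, p j ω} := by
  set S := {ω | ∀ j ∈ J, p j ω}
  have hcompl : Sᶜ = ⋃ j ∈ J, {ω | ¬ p j ω} := by ext ω; simp [S]
  have hfail : μ Sᶜ ≤ ENNReal.ofReal ε :=
    calc μ Sᶜ ≤ ∑ j ∈ J, μ {ω | ¬ p j ω} := hcompl ▸ measure_biUnion_finset_le J _
      _ ≤ ∑ j ∈ J, ENNReal.ofReal (εj j) := Finset.sum_le_sum hp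
      _ = ENNReal.ofReal (∑ j ∈ J, εj j) := (ENNReal.ofReal_sum_of_nonneg hεj).symm
      _ ≤ ENNReal.ofReal ε := ENNReal.ofReal_le_ofReal hsum
  rw [ENNReal.ofReal_sub _ hε, ENNReal.ofReal_one, tsub_le_iff_right]
  calc 1 = μ (S ∪ Sᶜ) := by rw [Set.union_compl_self, measure_univ]
    _ ≤ μ S + μ Sᶜ := measure_union_le _ _
    _ ≤ μ S + ENNReal.ofReal ε := by gcongr

end ProbabilityTheory

open ProbabilityTheory

theorem stmt_5_general {n : ℕ} {Ω : Type*} [MeasurableSpace Ω]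
    (P : Measure Ω) [IsProbabilityMeasure P]
    (v : Ω → Fin n → ℝ)
    (hv2 : ∀ i, MemLp (fun ω => v ω i) 2 P)
    (vbar : Fin n → ℝ) (hvbar : ∀ i, vbar i = ∫ ω, v ω i ∂P)
    (V : Matrix (Fin n) (Fin n) ℝ)
    (hV : ∀ i j, V i j = ∫ ω, (v ω i - vbar i) * (v ω j - vbar j) ∂P)
    {ι : Type*} (J : Finset ι) (a : ι → Fin n → ℝ) (b : ι → ℝ)
    (ε : ℝ) (hε0 : 0 < ε)
    (εj : ι → ℝ) (hεj : ∀ j ∈ J, 0 < εj j ∧ εj j < 1)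
    (hεsum : ∑ j ∈ J, εj j ≤ ε)
    (hcc : ∀ j ∈ J,
      a j ⬝ᵥ vbar + b j + Real.sqrt ((1 - εj j) / εj j * (a j ⬝ᵥ (V *ᵥ a j))) ≤ 0) :
    ENNReal.ofReal (1 - ε) ≤ P {ω | ∀ j ∈ J, a j ⬝ᵥ v ω + b j ≤ 0} := by
  have hvbar' : vbar = fun i => P[fun ω => v ω i] := funext hvbar
  have hV' : V = covarianceMatrix v P := by
    ext i j
    rw [hV, hvbar']
    rfl
  refine ofReal_one_sub_le_meas_forall J εj hε0.le (fun j hj => (hεj j hj).1.le) hεsum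
    fun j hj => meas_not_add_nonpos_le (memLp_dotProduct hv2 (a j)) (b j) (hεj j hj).1 ?_
  rw [integral_dotProduct (fun i => (hv2 i).integrable one_le_two), variance_dotProduct hv2,
    ← hvbar', ← hV']
  exact hcc j hj

/-- joint half-space chance constraints with risk allocation.
If for every `j` in a finite index set `J` one has
`a_jᵀv̄ + b_j + √(((1−ε_j)/ε_j)·a_jᵀVa_j) ≤ 0` with `Σ_j ε_j ≤ ε`, then
`P(a_jᵀv + b_j ≤ 0 for all j ∈ J) ≥ 1 − ε`. -/
theorem stmt_5 {n : ℕ} {Ω : Type*} [MeasurableSpace Ω]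
    (P : Measure Ω) [IsProbabilityMeasure P]
    (v : Ω → Fin n → ℝ) (hvmeas : Measurable v)
    (hv2 : ∀ i, MemLp (fun ω => v ω i) 2 P)
    (vbar : Fin n → ℝ) (hvbar : ∀ i, vbar i = ∫ ω, v ω i ∂P)
    (V : Matrix (Fin n) (Fin n) ℝ)
    (hV : ∀ i j, V i j = ∫ ω, (v ω i - vbar i) * (v ω j - vbar j) ∂P)
    {ι : Type*} (J : Finset ι) (a : ι → Fin n → ℝ) (b : ι → ℝ)
    (ε : ℝ) (hε0 : 0 < ε) (hε1 : ε < 1)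
    (εj : ι → ℝ) (hεj : ∀ j ∈ J, 0 < εj j ∧ εj j < 1)
    (hεsum : ∑ j ∈ J, εj j ≤ ε)
    (hcc : ∀ j ∈ J,
      a j ⬝ᵥ vbar + b j + Real.sqrt ((1 - εj j) / εj j * (a j ⬝ᵥ (V *ᵥ a j))) ≤ 0) :
    ENNReal.ofReal (1 - ε) ≤ P {ω | ∀ j ∈ J, a j ⬝ᵥ v ω + b j ≤ 0} :=
  stmt_5_general P v hv2 vbar hvbar V hV J a b ε hε0 εj hεj hεsum hcc
end

section
/- Define the next-state partial means q'(j) := E[x'·1_{r'=j}] for j ∈ S. Then q'(j) = Σ_{i∈S} p_{ij}·( A(i) q(i) + ρ(i)·(B(i) ū(i) + c) ), i.e., the partial means of a Markov jump linear system under mode-dependent affine feedback propagate according to this affine recursion (the feedback-gain terms K(i) cancel). -/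
/-!
On the event `{r = i} ∩ {r' = j}` the closed-loop state is an affine function
`(A i + B i * K i) x + (B i ū i - B i K i x̄ i + c) + G i w` of `x` and `w`, so its integral there is
read off from the joint moments: `x` integrates to `p i j • q i`, `w` to `0`, and the event has
mass `p i j * ρ i`. Since `ρ i • x̄ i = q i`, the gain terms `B i K i (p i j • q i)` cancel, and summing
over the partition `{r' = j} = ⋃ i, {r = i} ∩ {r' = j}` gives the recursion.
-/

open MeasureTheory Matrix

section AffineIntegral

variable {Ω : Type*} [MeasurableSpace Ω] {μ : Measure Ω} {m n : ℕ}

lemma integrable_mulVec_apply (M : Matrix (Fin n) (Fin m) ℝ) {v : Ω → Fin m → ℝ}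
    (hv : ∀ l, Integrable (fun ω => v ω l) μ) (k : Fin n) :
    Integrable (fun ω => (M *ᵥ v ω) k) μ := by
  simp only [mulVec, dotProduct]
  exact integrable_finsetSum _ fun l _ => (hv l).const_mul _

lemma integral_mulVec_apply (M : Matrix (Fin n) (Fin m) ℝ) {v : Ω → Fin m → ℝ}
    (hv : ∀ l, Integrable (fun ω => v ω l) μ) (k : Fin n) :
    ∫ ω, (M *ᵥ v ω) k ∂μ = (M *ᵥ fun l => ∫ ω, v ω l ∂μ) k := by
  simp only [mulVec, dotProduct]
  rw [integral_finsetSum _ fun l _ => (hv l).const_mul _]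
  simp only [integral_const_mul]

lemma integrable_affine_apply [IsFiniteMeasure μ] {nw : ℕ} (M : Matrix (Fin n) (Fin m) ℝ)
    (L : Matrix (Fin n) (Fin nw) ℝ) (b : Fin n → ℝ) {x : Ω → Fin m → ℝ} {w : Ω → Fin nw → ℝ}
    (hx : ∀ l, Integrable (fun ω => x ω l) μ) (hw : ∀ l, Integrable (fun ω => w ω l) μ)
    (k : Fin n) :
    Integrable (fun ω => (M *ᵥ x ω + b + L *ᵥ w ω) k) μ :=
  ((integrable_mulVec_apply M hx k).fun_add (integrable_const _)).fun_add
    (integrable_mulVec_apply L hw k)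

lemma integral_affine_apply [IsFiniteMeasure μ] {nw : ℕ} (M : Matrix (Fin n) (Fin m) ℝ)
    (L : Matrix (Fin n) (Fin nw) ℝ) (b : Fin n → ℝ) {x : Ω → Fin m → ℝ} {w : Ω → Fin nw → ℝ}
    (hx : ∀ l, Integrable (fun ω => x ω l) μ) (hw : ∀ l, Integrable (fun ω => w ω l) μ)
    (k : Fin n) :
    ∫ ω, (M *ᵥ x ω + b + L *ᵥ w ω) k ∂μ
      = (M *ᵥ fun l => ∫ ω, x ω l ∂μ) k + μ.real Set.univ * b k
        + (L *ᵥ fun l => ∫ ω, w ω l ∂μ) k := by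
  simp only [Pi.add_apply]
  rw [integral_add ((integrable_mulVec_apply M hx k).fun_add (integrable_const _))
      (integrable_mulVec_apply L hw k),
    integral_add (integrable_mulVec_apply M hx k) (integrable_const _),
    integral_mulVec_apply M hx, integral_mulVec_apply L hw, integral_const, smul_eq_mul]

lemma setIntegral_eq_sum_inter_fiber {ι E : Type*} [Fintype ι] [MeasurableSpace ι]
    [MeasurableSingletonClass ι] [NormedAddCommGroup E] [NormedSpace ℝ E] {r : Ω → ι}
    (hr : Measurable r) {s : Set Ω} (hs : MeasurableSet s) {f : Ω → E}
    (hf : ∀ i, IntegrableOn f ({ω | r ω = i} ∩ s) μ) :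
    ∫ ω in s, f ω ∂μ = ∑ i, ∫ ω in {ω | r ω = i} ∩ s, f ω ∂μ := by
  have hfiber : s = ⋃ i, {ω | r ω = i} ∩ s := by ext ω; simp
  have hdisj : Pairwise (Function.onFun Disjoint fun i => {ω | r ω = i} ∩ s) :=
    fun i i' hii' => Set.disjoint_left.2 fun ω hω hω' => hii' (hω.1.symm.trans hω'.1)
  conv_lhs => rw [hfiber]
  exact integral_iUnion_fintype (fun i => (hr (measurableSet_singleton i)).inter hs) hdisj hf

end AffineIntegral

lemma affineFeedback_eq {nx nu nw : ℕ} (A : Matrix (Fin nx) (Fin nx) ℝ)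
    (B : Matrix (Fin nx) (Fin nu) ℝ) (G : Matrix (Fin nx) (Fin nw) ℝ)
    (K : Matrix (Fin nu) (Fin nx) ℝ) (u : Fin nu → ℝ) (c xbar x : Fin nx → ℝ) (w : Fin nw → ℝ) :
    A *ᵥ x + B *ᵥ (u + K *ᵥ (x - xbar)) + c + G *ᵥ w
      = (A + B * K) *ᵥ x + (B *ᵥ u - (B * K) *ᵥ xbar + c) + G *ᵥ w := by
  simp only [mulVec_add, mulVec_sub, add_mulVec, ← mulVec_mulVec]
  abel

theorem stmt_16_general {nx nu nw N : ℕ} {Ω : Type*} [MeasurableSpace Ω]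
    (P : Measure Ω) [IsProbabilityMeasure P]
    (p : Fin N → Fin N → ℝ)
    (x : Ω → Fin nx → ℝ)
    (hx2 : ∀ k, MemLp (fun ω => x ω k) 2 P)
    (r r' : Ω → Fin N) (hrmeas : Measurable r) (hr'meas : Measurable r')
    (ρ : Fin N → ℝ)
    (hρpos : ∀ i, 0 < ρ i)
    (q : Fin N → Fin nx → ℝ)
    (xbar : Fin N → Fin nx → ℝ) (hxbar : ∀ i, xbar i = (ρ i)⁻¹ • q i)
    (w : Ω → Fin nw → ℝ)
    (hw1 : ∀ k, Integrable (fun ω => w ω k) P)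
    (A : Fin N → Matrix (Fin nx) (Fin nx) ℝ)
    (B : Fin N → Matrix (Fin nx) (Fin nu) ℝ)
    (G : Fin N → Matrix (Fin nx) (Fin nw) ℝ)
    (K : Fin N → Matrix (Fin nu) (Fin nx) ℝ)
    (ubar : Fin N → Fin nu → ℝ) (c : Fin nx → ℝ)
    (x' : Ω → Fin nx → ℝ)
    (hx' : ∀ ω, x' ω = A (r ω) *ᵥ x ω
        + B (r ω) *ᵥ (ubar (r ω) + K (r ω) *ᵥ (x ω - xbar (r ω)))
        + c + G (r ω) *ᵥ w ω)
    -- Markov property and independence of the noise: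
    (hjoint : ∀ i j,
      (P ({ω | r ω = i} ∩ {ω | r' ω = j})).toReal = p i j * ρ i)
    (hxjoint : ∀ i j k,
      ∫ ω in {ω | r ω = i} ∩ {ω | r' ω = j}, x ω k ∂P = p i j * q i k)
    (hwjoint : ∀ i j k,
      ∫ ω in {ω | r ω = i} ∩ {ω | r' ω = j}, w ω k ∂P = 0) :
    ∀ j k, ∫ ω in {ω | r' ω = j}, x' ω k ∂P
      = ∑ i, p i j * ((A i *ᵥ q i) k + ρ i * ((B i *ᵥ ubar i) k + c k)) := by
  intro j k
  set S : Fin N → Set Ω := fun i => {ω | r ω = i} ∩ {ω | r' ω = j}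
  have hS : ∀ i, MeasurableSet (S i) := fun i =>
    (hrmeas (measurableSet_singleton i)).inter (hr'meas (measurableSet_singleton j))
  have hx : ∀ l, Integrable (fun ω => x ω l) P := fun l => (hx2 l).integrable one_le_two
  have hclosed : ∀ i, Set.EqOn (fun ω => x' ω k) (fun ω => ((A i + B i * K i) *ᵥ x ω
      + (B i *ᵥ ubar i - (B i * K i) *ᵥ xbar i + c) + G i *ᵥ w ω) k) (S i) := by
    rintro i ω ⟨hri : r ω = i, -⟩
    simp only [hx', hri, affineFeedback_eq]
  have hρxbar : ∀ i, ρ i • xbar i = q i := fun i => by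
    rw [hxbar, smul_inv_smul₀ (hρpos i).ne']
  have hint : ∀ i, IntegrableOn (fun ω => x' ω k) (S i) P := fun i =>
    (integrable_affine_apply _ _ _ hx hw1 k).integrableOn.congr_fun (hclosed i).symm (hS i)
  rw [setIntegral_eq_sum_inter_fiber (s := {ω | r' ω = j}) hrmeas
    (hr'meas (measurableSet_singleton j)) hint]
  refine Finset.sum_congr rfl fun i _ => ?_
  rw [setIntegral_congr_fun (hS i) (hclosed i),
    integral_affine_apply _ _ _ (fun l => (hx l).integrableOn) fun l => (hw1 l).integrableOn,
    measureReal_restrict_apply_univ, measureReal_def, hjoint]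
  have hxS : (fun l => ∫ ω in S i, x ω l ∂P) = p i j • q i := funext (hxjoint i j)
  have hwS : (fun l => ∫ ω in S i, w ω l ∂P) = 0 := funext (hwjoint i j)
  rw [hxS, hwS, mulVec_zero, ← hρxbar i]
  simp only [mulVec_smul, add_mulVec, Pi.add_apply, Pi.sub_apply, Pi.smul_apply, Pi.zero_apply,
    smul_eq_mul]
  ring

/-- mean propagation of MJLS, Eq. (5) in the paper. Under the
mode-dependent affine feedback, the next-state partial means
`q'(j) = E[x'·1_{r'=j}]` satisfy the affine recursion
`q'(j) = Σ_i p_{ij}·( A(i) q(i) + ρ(i)·(B(i) ū(i) + c) )`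
(the feedback-gain terms `K(i)` cancel). -/
theorem stmt_16 {nx nu nw N : ℕ} {Ω : Type*} [MeasurableSpace Ω]
    (P : Measure Ω) [IsProbabilityMeasure P]
    (p : Fin N → Fin N → ℝ) (hp : ∀ i j, 0 ≤ p i j) (hp1 : ∀ i, ∑ j, p i j = 1)
    (x : Ω → Fin nx → ℝ) (hxmeas : Measurable x)
    (hx2 : ∀ k, MemLp (fun ω => x ω k) 2 P)
    (r r' : Ω → Fin N) (hrmeas : Measurable r) (hr'meas : Measurable r')
    (ρ : Fin N → ℝ) (hρ : ∀ i, ρ i = (P {ω | r ω = i}).toReal)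
    (hρpos : ∀ i, 0 < ρ i)
    (q : Fin N → Fin nx → ℝ)
    (hq : ∀ i k, q i k = ∫ ω in {ω | r ω = i}, x ω k ∂P)
    (xbar : Fin N → Fin nx → ℝ) (hxbar : ∀ i, xbar i = (ρ i)⁻¹ • q i)
    (w : Ω → Fin nw → ℝ) (hwmeas : Measurable w)
    (hw1 : ∀ k, Integrable (fun ω => w ω k) P)
    (A : Fin N → Matrix (Fin nx) (Fin nx) ℝ)
    (B : Fin N → Matrix (Fin nx) (Fin nu) ℝ)
    (G : Fin N → Matrix (Fin nx) (Fin nw) ℝ)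
    (K : Fin N → Matrix (Fin nu) (Fin nx) ℝ)
    (ubar : Fin N → Fin nu → ℝ) (c : Fin nx → ℝ)
    (x' : Ω → Fin nx → ℝ)
    (hx' : ∀ ω, x' ω = A (r ω) *ᵥ x ω
        + B (r ω) *ᵥ (ubar (r ω) + K (r ω) *ᵥ (x ω - xbar (r ω)))
        + c + G (r ω) *ᵥ w ω)
    -- Markov property and independence of the noise:
    (hjoint : ∀ i j,
      (P ({ω | r ω = i} ∩ {ω | r' ω = j})).toReal = p i j * ρ i)
    (hxjoint : ∀ i j k,
      ∫ ω in {ω | r ω = i} ∩ {ω | r' ω = j}, x ω k ∂P = p i j * q i k)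
    (hwjoint : ∀ i j k,
      ∫ ω in {ω | r ω = i} ∩ {ω | r' ω = j}, w ω k ∂P = 0) :
    ∀ j k, ∫ ω in {ω | r' ω = j}, x' ω k ∂P
      = ∑ i, p i j * ((A i *ᵥ q i) k + ρ i * ((B i *ᵥ ubar i) k + c k)) :=
  stmt_16_general P p x hx2 r r' hrmeas hr'meas ρ hρpos q xbar hxbar w hw1 A B G K ubar c x' hx'
    hjoint hxjoint hwjoint
end

section
/- Define ρ'(j) := Σ_{i∈S} p_{ij} ρ(i) (assumed positive for all j), q'(j) := E[x'·1_{r'=j}], x̄'(j) := q'(j)/ρ'(j), and the next-step partial covariances S'(j) := E[(x' − x̄'(j))(x' − x̄'(j))ᵀ·1_{r'=j}]. Then for every j ∈ S, S'(j) = Σ_{i∈S} p_{ij}·[ A(i) S(i) A(i)ᵀ + A(i) S(i) K(i)ᵀ B(i)ᵀ + B(i) K(i) S(i) A(i)ᵀ + B(i) K(i) S(i) K(i)ᵀ B(i)ᵀ + ρ(i)·( (A(i) x̄(i) + B(i) ū(i) + c)(A(i) x̄(i) + B(i) ū(i) + c)ᵀ + G(i) G(i)ᵀ ) ] − ρ'(j)·x̄'(j)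 x̄'(j)ᵀ. In particular, the terms involving the conditional means x̄(i) do not cancel, so the covariance propagation of a Markov jump linear system is coupled to its mean trajectory. -/
open MeasureTheory Matrix

/-!
On the cell `{r = i} ∩ {r' = j}` the next state is the affine image `(A + BK) x + bᵢ + G w` of the
stacked vector `(x, w)`, with `bᵢ = B ū − BK x̄(i) + c`. The Markov and white-noise hypotheses say
that on this cell `(x, w)` has first moment `p_ij ρ(i) (x̄(i), 0)` and block-diagonal second moment
`p_ij diag(S(i) + ρ(i) x̄(i) x̄(i)ᵀ, ρ(i) I)`, so the second moment of `x'` there is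
`p_ij [(A + BK) S(i) (A + BK)ᵀ + ρ(i) ((A + BK) x̄(i) + bᵢ)(…)ᵀ + ρ(i) G Gᵀ]`; the affine offset
`bᵢ` is exactly what couples the mean `x̄(i)` into the covariance. The cells partition `{r' = j}`,
so summing over `i` gives the raw second moment of `x'` on `{r' = j}`, and centering it at `x̄'(j)`
subtracts `ρ'(j) x̄'(j) x̄'(j)ᵀ`.
-/

namespace MeasureTheory

variable {Ω ι κ : Type*} [MeasurableSpace Ω] {μ : Measure Ω}

/- Raw moments with respect to an arbitrary, not normalized, measure: for `μ = P.restrict {r = i}`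
they are the paper's `E[x·1_{r=i}]` and `E[x xᵀ·1_{r=i}]`. -/
noncomputable def firstMoment (μ : Measure Ω) (z : Ω → ι → ℝ) : ι → ℝ :=
  fun a => ∫ ω, z ω a ∂μ

noncomputable def secondMoment (μ : Measure Ω) (z : Ω → ι → ℝ) : Matrix ι ι ℝ :=
  of fun a b => ∫ ω, z ω a * z ω b ∂μ

lemma firstMoment_mulVec [Fintype ι] {z : Ω → ι → ℝ} (hz : ∀ a, Integrable (fun ω => z ω a) μ)
    (C : Matrix κ ι ℝ) :
    firstMoment μ (fun ω => C *ᵥ z ω) = C *ᵥ firstMoment μ z := by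
  ext k
  simp only [firstMoment, mulVec, dotProduct]
  rw [integral_finsetSum _ fun a _ => (hz a).const_mul _]
  simp_rw [integral_const_mul]

lemma secondMoment_mulVec [Fintype ι] {z : Ω → ι → ℝ}
    (hz : ∀ a b, Integrable (fun ω => z ω a * z ω b) μ) (C : Matrix κ ι ℝ) :
    secondMoment μ (fun ω => C *ᵥ z ω) = C * secondMoment μ z * Cᵀ := by
  ext k l
  have hpt : ∀ ω, (C *ᵥ z ω) k * (C *ᵥ z ω) l = ∑ a, ∑ b, C k a * C l b * (z ω a * z ω b) := by
    intro ω
    simp only [mulVec, dotProduct, Finset.sum_mul_sum]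
    exact Finset.sum_congr rfl fun a _ => Finset.sum_congr rfl fun b _ => by ring
  simp only [secondMoment, of_apply, hpt, mul_apply, transpose_apply, Finset.sum_mul]
  rw [integral_finsetSum _ fun a _ => integrable_finsetSum _ fun b _ => (hz a b).const_mul _,
    Finset.sum_comm]
  refine Finset.sum_congr rfl fun a _ => ?_
  rw [integral_finsetSum _ fun b _ => (hz a b).const_mul _]
  exact Finset.sum_congr rfl fun b _ => by rw [integral_const_mul]; ring

lemma secondMoment_add_const [IsFiniteMeasure μ] {z : Ω → ι → ℝ}
    (hz₁ : ∀ a, Integrable (fun ω => z ω a) μ)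
    (hz₂ : ∀ a b, Integrable (fun ω => z ω a * z ω b) μ) (d : ι → ℝ) :
    secondMoment μ (fun ω => z ω + d) = secondMoment μ z + vecMulVec (firstMoment μ z) d
      + vecMulVec d (firstMoment μ z) + μ.real Set.univ • vecMulVec d d := by
  ext k l
  have hpt : ∀ ω, (z ω + d) k * (z ω + d) l
      = z ω k * z ω l + d l * z ω k + d k * z ω l + d k * d l := fun ω => by
    simp only [Pi.add_apply]; ring
  have hkl := hz₂ k l
  have hk := (hz₁ k).const_mul (d l)
  have hl := (hz₁ l).const_mul (d k)
  simp only [secondMoment, firstMoment, of_apply, hpt, Matrix.add_apply, vecMulVec_apply,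
    Matrix.smul_apply, smul_eq_mul]
  rw [integral_add, integral_add, integral_add, integral_const_mul, integral_const_mul,
    integral_const, smul_eq_mul]
  · ring
  exacts [hkl, hk, hkl.add hk, hl, (hkl.add hk).add hl, integrable_const _]

lemma secondMoment_sub_const_of_firstMoment_eq [IsFiniteMeasure μ] {z : Ω → ι → ℝ}
    (hz : ∀ a, MemLp (fun ω => z ω a) 2 μ) {d : ι → ℝ}
    (hd : firstMoment μ z = μ.real Set.univ • d) :
    secondMoment μ (fun ω => z ω - d) = secondMoment μ z - μ.real Set.univ • vecMulVec d d := by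
  simp_rw [sub_eq_add_neg]
  rw [secondMoment_add_const (fun a => (hz a).integrable one_le_two)
    (fun a b => (hz a).integrable_mul (hz b)), hd]
  simp only [smul_vecMulVec, vecMulVec_smul, vecMulVec_neg, neg_vecMulVec, neg_neg, smul_neg]
  abel

lemma memLp_mulVec [Fintype ι] {p : ENNReal} {z : Ω → ι → ℝ}
    (hz : ∀ a, MemLp (fun ω => z ω a) p μ) (C : Matrix κ ι ℝ) (k : κ) :
    MemLp (fun ω => (C *ᵥ z ω) k) p μ :=
  memLp_finsetSum _ fun a _ => (hz a).const_mul (C k a)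

lemma secondMoment_mulVec_add_const [IsFiniteMeasure μ] [Fintype ι] {z : Ω → ι → ℝ}
    (hz : ∀ a, MemLp (fun ω => z ω a) 2 μ) (C : Matrix κ ι ℝ) (d : κ → ℝ) :
    secondMoment μ (fun ω => C *ᵥ z ω + d)
      = C * secondMoment μ z * Cᵀ + vecMulVec (C *ᵥ firstMoment μ z) d
        + vecMulVec d (C *ᵥ firstMoment μ z) + μ.real Set.univ • vecMulVec d d := by
  have hCz := memLp_mulVec hz C
  rw [secondMoment_add_const (fun k => (hCz k).integrable one_le_two)
      (fun k l => (hCz k).integrable_mul (hCz l)),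
    firstMoment_mulVec (fun a => (hz a).integrable one_le_two),
    secondMoment_mulVec fun a b => (hz a).integrable_mul (hz b)]

lemma secondMoment_restrict_congr {s : Set Ω} (hs : MeasurableSet s) {f g : Ω → ι → ℝ}
    (h : Set.EqOn f g s) :
    secondMoment (μ.restrict s) f = secondMoment (μ.restrict s) g := by
  ext a b
  exact setIntegral_congr_fun hs fun ω hω => by rw [h hω]

lemma secondMoment_finsetSum_measure {β : Type*} {s : Finset β} {μ : β → Measure Ω}
    {z : Ω → ι → ℝ} (hz : ∀ i ∈ s, ∀ a b, Integrable (fun ω => z ω a * z ω b) (μ i)) :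
    secondMoment (∑ i ∈ s, μ i) z = ∑ i ∈ s, secondMoment (μ i) z := by
  ext a b
  simp only [secondMoment, of_apply, Matrix.sum_apply]
  exact integral_finsetSum_measure fun i hi => hz i hi a b

lemma Measure.restrict_eq_sum_restrict_fiber {β : Type*} [Fintype β] [MeasurableSpace β]
    [MeasurableSingletonClass β] {r : Ω → β} (hr : Measurable r) (s : Set Ω) :
    μ.restrict s = ∑ i, μ.restrict ({ω | r ω = i} ∩ s) := by
  ext t ht
  have hfiber : ∀ i, MeasurableSet (r ⁻¹' {i}) := fun i => hr (measurableSet_singleton i)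
  rw [Measure.finsetSum_apply, Measure.restrict_apply ht]
  calc μ (t ∩ s) = μ.restrict (t ∩ s) (r ⁻¹' ↑(Finset.univ : Finset β)) := by simp
    _ = ∑ i, μ.restrict (t ∩ s) (r ⁻¹' {i}) :=
      (sum_measure_preimage_singleton _ fun i _ => hfiber i).symm
    _ = ∑ i, μ.restrict ({ω | r ω = i} ∩ s) t := by
      refine Finset.sum_congr rfl fun i _ => ?_
      rw [Measure.restrict_apply (hfiber i), Measure.restrict_apply ht, Set.inter_left_comm]
      rfl

lemma measureReal_eq_sum_fiber [IsFiniteMeasure μ] {β : Type*} [Fintype β] [MeasurableSpace β]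
    [MeasurableSingletonClass β] {r : Ω → β} (hr : Measurable r) (s : Set Ω) :
    μ.real s = ∑ i, μ.real ({ω | r ω = i} ∩ s) := by
  rw [← measureReal_restrict_apply_univ, Measure.restrict_eq_sum_restrict_fiber hr,
    measureReal_def, Measure.finsetSum_apply, ENNReal.toReal_sum fun i _ => measure_ne_top _ _]
  simp only [Measure.restrict_apply_univ, measureReal_def]

lemma secondMoment_restrict_sub_eq_sum_fiber [IsFiniteMeasure μ] {β : Type*} [Fintype β]
    [MeasurableSpace β] [MeasurableSingletonClass β] {r : Ω → β} (hr : Measurable r)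
    {z : Ω → ι → ℝ} (hz : ∀ a, MemLp (fun ω => z ω a) 2 μ) {s : Set Ω} {d : ι → ℝ}
    (hd : firstMoment (μ.restrict s) z = μ.real s • d) :
    secondMoment (μ.restrict s) (fun ω => z ω - d)
      = ∑ i, secondMoment (μ.restrict ({ω | r ω = i} ∩ s)) z - μ.real s • vecMulVec d d := by
  rw [← measureReal_restrict_apply_univ] at hd
  rw [secondMoment_sub_const_of_firstMoment_eq (fun a => (hz a).restrict s) hd,
    measureReal_restrict_apply_univ, Measure.restrict_eq_sum_restrict_fiber hr s,
    secondMoment_finsetSum_measure fun i _ a b => ((hz a).integrable_mul (hz b)).integrableOn]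

lemma memLp_of_eq_fiberwise {E β : Type*} [NormedAddCommGroup E] [Fintype β] [MeasurableSpace β]
    [MeasurableSingletonClass β] {p : ENNReal} {r : Ω → β} (hr : Measurable r) {g : β → Ω → E}
    (hg : ∀ i, MemLp (g i) p μ) {f : Ω → E} (hf : ∀ ω, f ω = g (r ω) ω) : MemLp f p μ := by
  have hsum : f = ∑ i, (r ⁻¹' {i}).indicator (g i) := by
    ext ω
    rw [Finset.sum_apply, Finset.sum_eq_single_of_mem (r ω) (Finset.mem_univ _), hf ω,
      Set.indicator_of_mem (s := r ⁻¹' {r ω}) rfl]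
    exact fun i _ hi => Set.indicator_of_notMem (s := r ⁻¹' {i}) hi.symm _
  rw [hsum]
  exact memLp_finsetSum' _ fun i _ => (hg i).indicator (hr (measurableSet_singleton i))

lemma secondMoment_mulVec_add_mulVec_of_uncorrelated {η : Type*} [IsFiniteMeasure μ] [Fintype ι]
    [Fintype κ] {x : Ω → ι → ℝ} {w : Ω → κ → ℝ}
    (hx : ∀ a, MemLp (fun ω => x ω a) 2 μ) (hw : ∀ a, MemLp (fun ω => w ω a) 2 μ)
    {xbar : ι → ℝ} (hxbar : firstMoment μ x = μ.real Set.univ • xbar) (hw₁ : firstMoment μ w = 0)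
    (hwx : ∀ a b, ∫ ω, w ω a * x ω b ∂μ = 0) (M : Matrix η ι ℝ) (G : Matrix η κ ℝ) (b : η → ℝ) :
    secondMoment μ (fun ω => M *ᵥ x ω + b + G *ᵥ w ω)
      = M * secondMoment μ (fun ω => x ω - xbar) * Mᵀ
        + μ.real Set.univ • vecMulVec (M *ᵥ xbar + b) (M *ᵥ xbar + b)
        + G * secondMoment μ w * Gᵀ := by
  set z : Ω → ι ⊕ κ → ℝ := fun ω => Sum.elim (x ω) (w ω)
  have hz : ∀ t, MemLp (fun ω => z ω t) 2 μ := by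
    rintro (a | a)
    exacts [hx a, hw a]
  have hz_first : firstMoment μ z = Sum.elim (μ.real Set.univ • xbar) 0 := by
    ext (a | a)
    exacts [congrFun hxbar a, congrFun hw₁ a]
  have hz_second : secondMoment μ z = fromBlocks (secondMoment μ x) 0 0 (secondMoment μ w) := by
    ext (a | a) (b | b)
    · rfl
    · exact (integral_congr_ae (ae_of_all _ fun ω => mul_comm _ _)).trans (hwx b a)
    · exact hwx a b
    · rfl
  have hx_second : secondMoment μ x
      = secondMoment μ (fun ω => x ω - xbar) + μ.real Set.univ • vecMulVec xbar xbar := by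
    rw [secondMoment_sub_const_of_firstMoment_eq hx hxbar, sub_add_cancel]
  have hz_affine : (fun ω => M *ᵥ x ω + b + G *ᵥ w ω) = fun ω => fromCols M G *ᵥ z ω + b := by
    funext ω
    rw [fromCols_mulVec_sumElim]
    abel
  rw [hz_affine, secondMoment_mulVec_add_const hz, hz_first, hz_second, fromCols_mulVec_sumElim,
    transpose_fromCols, fromCols_mul_fromBlocks, fromCols_mul_fromRows, hx_second]
  generalize secondMoment μ (fun ω => x ω - xbar) = S
  simp only [mulVec_zero, add_zero, Matrix.mul_zero, Matrix.zero_mul, Matrix.mul_add,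
    Matrix.add_mul, Matrix.mul_smul, Matrix.smul_mul, mul_vecMulVec, vecMulVec_mul,
    vecMul_transpose, mulVec_smul, add_vecMulVec, vecMulVec_add, smul_vecMulVec, vecMulVec_smul,
    smul_add]
  abel

end MeasureTheory

lemma mulVec_feedback_eq {ι υ κ : Type*} [Fintype ι] [Fintype υ] [Fintype κ]
    (A : Matrix ι ι ℝ) (B : Matrix ι υ ℝ) (G : Matrix ι κ ℝ) (K : Matrix υ ι ℝ) (ubar : υ → ℝ)
    (c x xbar : ι → ℝ) (w : κ → ℝ) :
    A *ᵥ x + B *ᵥ (ubar + K *ᵥ (x - xbar)) + c + G *ᵥ w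
      = (A + B * K) *ᵥ x + (B *ᵥ ubar - (B * K) *ᵥ xbar + c) + G *ᵥ w := by
  simp only [add_mulVec, mulVec_add, mulVec_sub, ← mulVec_mulVec]
  abel

lemma secondMoment_restrict_feedback {Ω ι υ κ : Type*} [MeasurableSpace Ω] [Fintype ι]
    [Fintype υ] [Fintype κ] [DecidableEq κ] {P : Measure Ω} [IsFiniteMeasure P] {s t : Set Ω}
    {x : Ω → ι → ℝ} {w : Ω → κ → ℝ} (hx : ∀ a, MemLp (fun ω => x ω a) 2 P)
    (hw : ∀ a, MemLp (fun ω => w ω a) 2 P) {p ρ : ℝ} {xbar : ι → ℝ}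
    {A : Matrix ι ι ℝ} {B : Matrix ι υ ℝ} {G : Matrix ι κ ℝ} {K : Matrix υ ι ℝ} {ubar : υ → ℝ}
    {c : ι → ℝ} {x' : Ω → ι → ℝ} (ht_meas : MeasurableSet t)
    (hx' : Set.EqOn x' (fun ω => A *ᵥ x ω + B *ᵥ (ubar + K *ᵥ (x ω - xbar)) + c + G *ᵥ w ω) t)
    (hs : P.real s = ρ) (ht : P.real t = p * ρ)
    (hxs : ∀ a, ∫ ω in s, x ω a ∂P = ρ * xbar a)
    (hxt : ∀ a, ∫ ω in t, x ω a ∂P = p * (ρ * xbar a))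
    (hxxt : ∀ a b, ∫ ω in t, x ω a * x ω b ∂P = p * ∫ ω in s, x ω a * x ω b ∂P)
    (hwt : ∀ a, ∫ ω in t, w ω a ∂P = 0) (hwxt : ∀ a b, ∫ ω in t, w ω a * x ω b ∂P = 0)
    (hwwt : ∀ a b, ∫ ω in t, w ω a * w ω b ∂P = p * ρ * (1 : Matrix κ κ ℝ) a b)
    {S : Matrix ι ι ℝ} (hS : secondMoment (P.restrict s) (fun ω => x ω - xbar) = S) :
    secondMoment (P.restrict t) x'
      = p • (A * S * Aᵀ + A * S * Kᵀ * Bᵀ + B * K * S * Aᵀ + B * K * S * Kᵀ * Bᵀ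
          + ρ • (vecMulVec (A *ᵥ xbar + B *ᵥ ubar + c) (A *ᵥ xbar + B *ᵥ ubar + c) + G * Gᵀ)) := by
  have hx_s : firstMoment (P.restrict s) x = (P.restrict s).real Set.univ • xbar := by
    ext a
    rw [measureReal_restrict_apply_univ, hs]
    exact hxs a
  have hx_t : firstMoment (P.restrict t) x = (P.restrict t).real Set.univ • xbar := by
    ext a
    rw [measureReal_restrict_apply_univ, ht, Pi.smul_apply, smul_eq_mul, mul_assoc]
    exact hxt a
  have hxx_t : secondMoment (P.restrict t) x = p • secondMoment (P.restrict s) x := by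
    ext a b
    exact hxxt a b
  have hww_t : secondMoment (P.restrict t) w = (p * ρ) • 1 := by
    ext a b
    exact hwwt a b
  have hcentered : secondMoment (P.restrict t) (fun ω => x ω - xbar)
      = p • secondMoment (P.restrict s) (fun ω => x ω - xbar) := by
    rw [secondMoment_sub_const_of_firstMoment_eq (fun a => (hx a).restrict t) hx_t,
      secondMoment_sub_const_of_firstMoment_eq (fun a => (hx a).restrict s) hx_s,
      hxx_t, measureReal_restrict_apply_univ, measureReal_restrict_apply_univ, hs, ht, smul_sub,
      mul_smul]
  simp_rw [secondMoment_restrict_congr ht_meas hx', mulVec_feedback_eq A B G K ubar c _ xbar]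
  rw [secondMoment_mulVec_add_mulVec_of_uncorrelated (fun a => (hx a).restrict t)
      (fun a => (hw a).restrict t) hx_t (funext hwt) hwxt, hcentered, hww_t,
    measureReal_restrict_apply_univ, ht, hS]
  have hmean : (A + B * K) *ᵥ xbar + (B *ᵥ ubar - (B * K) *ᵥ xbar + c)
      = A *ᵥ xbar + B *ᵥ ubar + c := by
    rw [add_mulVec]
    abel
  rw [hmean]
  simp only [Matrix.transpose_add, Matrix.transpose_mul, Matrix.add_mul, Matrix.mul_add,
    Matrix.mul_smul, Matrix.smul_mul, Matrix.mul_one, Matrix.mul_assoc, smul_add, mul_smul]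
  abel

theorem stmt_17_general {nx nu nw N : ℕ} {Ω : Type*} [MeasurableSpace Ω]
    (P : Measure Ω) [IsProbabilityMeasure P]
    (p : Fin N → Fin N → ℝ)
    (x : Ω → Fin nx → ℝ)
    (hx2 : ∀ k, MemLp (fun ω => x ω k) 2 P)
    (r r' : Ω → Fin N) (hrmeas : Measurable r) (hr'meas : Measurable r')
    (ρ : Fin N → ℝ) (hρ : ∀ i, ρ i = (P {ω | r ω = i}).toReal)
    (hρpos : ∀ i, 0 < ρ i)
    (q : Fin N → Fin nx → ℝ)
    (hq : ∀ i k, q i k = ∫ ω in {ω | r ω = i}, x ω k ∂P)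
    (xbar : Fin N → Fin nx → ℝ) (hxbar : ∀ i, xbar i = (ρ i)⁻¹ • q i)
    (Sc : Fin N → Matrix (Fin nx) (Fin nx) ℝ)
    (hSc : ∀ i k l, Sc i k l
      = ∫ ω in {ω | r ω = i}, (x ω k - xbar i k) * (x ω l - xbar i l) ∂P)
    (w : Ω → Fin nw → ℝ)
    (hw2 : ∀ k, MemLp (fun ω => w ω k) 2 P)
    (A : Fin N → Matrix (Fin nx) (Fin nx) ℝ)
    (B : Fin N → Matrix (Fin nx) (Fin nu) ℝ)
    (G : Fin N → Matrix (Fin nx) (Fin nw) ℝ)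
    (K : Fin N → Matrix (Fin nu) (Fin nx) ℝ)
    (ubar : Fin N → Fin nu → ℝ) (c : Fin nx → ℝ)
    (x' : Ω → Fin nx → ℝ)
    (hx' : ∀ ω, x' ω = A (r ω) *ᵥ x ω
        + B (r ω) *ᵥ (ubar (r ω) + K (r ω) *ᵥ (x ω - xbar (r ω)))
        + c + G (r ω) *ᵥ w ω)
    -- Markov property and white-noise independence:
    (hjoint : ∀ i j,
      (P ({ω | r ω = i} ∩ {ω | r' ω = j})).toReal = p i j * ρ i)
    (hxjoint : ∀ i j k,
      ∫ ω in {ω | r ω = i} ∩ {ω | r' ω = j}, x ω k ∂P = p i j * q i k)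
    (hxxjoint : ∀ i j k l,
      ∫ ω in {ω | r ω = i} ∩ {ω | r' ω = j}, x ω k * x ω l ∂P
        = p i j * ∫ ω in {ω | r ω = i}, x ω k * x ω l ∂P)
    (hwjoint : ∀ i j k,
      ∫ ω in {ω | r ω = i} ∩ {ω | r' ω = j}, w ω k ∂P = 0)
    (hwxjoint : ∀ i j k l,
      ∫ ω in {ω | r ω = i} ∩ {ω | r' ω = j}, w ω k * x ω l ∂P = 0)
    (hwwjoint : ∀ i j k l,
      ∫ ω in {ω | r ω = i} ∩ {ω | r' ω = j}, w ω k * w ω l ∂P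
        = p i j * ρ i * (1 : Matrix (Fin nw) (Fin nw) ℝ) k l)
    -- next-step quantities:
    (ρ' : Fin N → ℝ) (hρ' : ∀ j, ρ' j = ∑ i, p i j * ρ i)
    (hρ'pos : ∀ j, 0 < ρ' j)
    (q' : Fin N → Fin nx → ℝ)
    (hq' : ∀ j k, q' j k = ∫ ω in {ω | r' ω = j}, x' ω k ∂P)
    (xbar' : Fin N → Fin nx → ℝ) (hxbar' : ∀ j, xbar' j = (ρ' j)⁻¹ • q' j)
    (S' : Fin N → Matrix (Fin nx) (Fin nx) ℝ)
    (hS' : ∀ j k l, S' j k l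
      = ∫ ω in {ω | r' ω = j}, (x' ω k - xbar' j k) * (x' ω l - xbar' j l) ∂P) :
    ∀ j, S' j
      = ∑ i, p i j •
          (A i * Sc i * (A i)ᵀ + A i * Sc i * (K i)ᵀ * (B i)ᵀ
            + B i * K i * Sc i * (A i)ᵀ + B i * K i * Sc i * (K i)ᵀ * (B i)ᵀ
            + ρ i • (vecMulVec (A i *ᵥ xbar i + B i *ᵥ ubar i + c)
                        (A i *ᵥ xbar i + B i *ᵥ ubar i + c)
                      + G i * (G i)ᵀ))
        - ρ' j • vecMulVec (xbar' j) (xbar' j) := by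
  intro j
  have hq_eq : ∀ i, q i = ρ i • xbar i := fun i => by rw [hxbar, smul_inv_smul₀ (hρpos i).ne']
  have hq'_eq : q' j = ρ' j • xbar' j := by rw [hxbar', smul_inv_smul₀ (hρ'pos j).ne']
  have hSc_eq : ∀ i, Sc i = secondMoment (P.restrict {ω | r ω = i}) (fun ω => x ω - xbar i) :=
    fun i => by ext k l; exact hSc i k l
  have hx'2 : ∀ k, MemLp (fun ω => x' ω k) 2 P := fun k =>
    memLp_of_eq_fiberwise hrmeas
      (g := fun i ω => ((A i + B i * K i) *ᵥ x ω + (B i *ᵥ ubar i - (B i * K i) *ᵥ xbar i + c)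
        + G i *ᵥ w ω) k)
      (fun i => ((memLp_mulVec hx2 _ k).add (memLp_const _)).add (memLp_mulVec hw2 _ k))
      fun ω => by rw [hx' ω, mulVec_feedback_eq]
  have hcell_meas : ∀ i, MeasurableSet ({ω | r ω = i} ∩ {ω | r' ω = j}) := fun i =>
    (hrmeas (measurableSet_singleton i)).inter (hr'meas (measurableSet_singleton j))
  have hP' : P.real {ω | r' ω = j} = ρ' j := by
    rw [measureReal_eq_sum_fiber hrmeas, hρ']
    exact Finset.sum_congr rfl fun i _ => hjoint i j
  have hx'_first :
      firstMoment (P.restrict {ω | r' ω = j}) x' = P.real {ω | r' ω = j} • xbar' j := by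
    ext k
    rw [hP', ← hq'_eq]
    exact (hq' j k).symm
  calc S' j = secondMoment (P.restrict {ω | r' ω = j}) (fun ω => x' ω - xbar' j) := by
        ext k l; exact hS' j k l
    _ = _ := by
        rw [secondMoment_restrict_sub_eq_sum_fiber hrmeas hx'2 hx'_first, hP']
        refine congrArg (· - _) (Finset.sum_congr rfl fun i _ => ?_)
        exact secondMoment_restrict_feedback hx2 hw2 (hcell_meas i)
          (fun ω hω => by rw [hx' ω, (hω.1 : r ω = i)]) (hρ i).symm (hjoint i j)
          (fun a => by rw [← hq, hq_eq]; rfl) (fun a => by rw [hxjoint, hq_eq]; rfl)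
          (hxxjoint i j) (hwjoint i j) (hwxjoint i j) (hwwjoint i j) (hSc_eq i).symm

/-- covariance propagation of MJLS, Eq. (6)/(13) in the paper.
Under the mode-dependent affine feedback, the next-step partial covariances
`S'(j) = E[(x' − x̄'(j))(x' − x̄'(j))ᵀ·1_{r'=j}]` satisfy
`S'(j) = Σ_i p_{ij}·[ A(i) S(i) A(i)ᵀ + A(i) S(i) K(i)ᵀ B(i)ᵀ + B(i) K(i) S(i) A(i)ᵀ
  + B(i) K(i) S(i) K(i)ᵀ B(i)ᵀ
  + ρ(i)·( (A(i) x̄(i) + B(i) ū(i) + c)(A(i) x̄(i) + B(i) ū(i) + c)ᵀ + G(i) G(i)ᵀ ) ]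
  − ρ'(j)·x̄'(j) x̄'(j)ᵀ`;
in particular the terms involving the conditional means `x̄(i)` do not cancel, so the
covariance propagation is coupled to the mean trajectory. -/
theorem stmt_17 {nx nu nw N : ℕ} {Ω : Type*} [MeasurableSpace Ω]
    (P : Measure Ω) [IsProbabilityMeasure P]
    (p : Fin N → Fin N → ℝ) (hp : ∀ i j, 0 ≤ p i j) (hp1 : ∀ i, ∑ j, p i j = 1)
    (x : Ω → Fin nx → ℝ) (hxmeas : Measurable x)
    (hx2 : ∀ k, MemLp (fun ω => x ω k) 2 P)
    (r r' : Ω → Fin N) (hrmeas : Measurable r) (hr'meas : Measurable r')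
    (ρ : Fin N → ℝ) (hρ : ∀ i, ρ i = (P {ω | r ω = i}).toReal)
    (hρpos : ∀ i, 0 < ρ i)
    (q : Fin N → Fin nx → ℝ)
    (hq : ∀ i k, q i k = ∫ ω in {ω | r ω = i}, x ω k ∂P)
    (xbar : Fin N → Fin nx → ℝ) (hxbar : ∀ i, xbar i = (ρ i)⁻¹ • q i)
    (Sc : Fin N → Matrix (Fin nx) (Fin nx) ℝ)
    (hSc : ∀ i k l, Sc i k l
      = ∫ ω in {ω | r ω = i}, (x ω k - xbar i k) * (x ω l - xbar i l) ∂P)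
    (w : Ω → Fin nw → ℝ) (hwmeas : Measurable w)
    (hw2 : ∀ k, MemLp (fun ω => w ω k) 2 P)
    (A : Fin N → Matrix (Fin nx) (Fin nx) ℝ)
    (B : Fin N → Matrix (Fin nx) (Fin nu) ℝ)
    (G : Fin N → Matrix (Fin nx) (Fin nw) ℝ)
    (K : Fin N → Matrix (Fin nu) (Fin nx) ℝ)
    (ubar : Fin N → Fin nu → ℝ) (c : Fin nx → ℝ)
    (x' : Ω → Fin nx → ℝ)
    (hx' : ∀ ω, x' ω = A (r ω) *ᵥ x ω
        + B (r ω) *ᵥ (ubar (r ω) + K (r ω) *ᵥ (x ω - xbar (r ω)))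
        + c + G (r ω) *ᵥ w ω)
    -- Markov property and white-noise independence:
    (hjoint : ∀ i j,
      (P ({ω | r ω = i} ∩ {ω | r' ω = j})).toReal = p i j * ρ i)
    (hxjoint : ∀ i j k,
      ∫ ω in {ω | r ω = i} ∩ {ω | r' ω = j}, x ω k ∂P = p i j * q i k)
    (hxxjoint : ∀ i j k l,
      ∫ ω in {ω | r ω = i} ∩ {ω | r' ω = j}, x ω k * x ω l ∂P
        = p i j * ∫ ω in {ω | r ω = i}, x ω k * x ω l ∂P)
    (hwjoint : ∀ i j k,
      ∫ ω in {ω | r ω = i} ∩ {ω | r' ω = j}, w ω k ∂P = 0)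
    (hwxjoint : ∀ i j k l,
      ∫ ω in {ω | r ω = i} ∩ {ω | r' ω = j}, w ω k * x ω l ∂P = 0)
    (hwwjoint : ∀ i j k l,
      ∫ ω in {ω | r ω = i} ∩ {ω | r' ω = j}, w ω k * w ω l ∂P
        = p i j * ρ i * (1 : Matrix (Fin nw) (Fin nw) ℝ) k l)
    -- next-step quantities:
    (ρ' : Fin N → ℝ) (hρ' : ∀ j, ρ' j = ∑ i, p i j * ρ i)
    (hρ'pos : ∀ j, 0 < ρ' j)
    (q' : Fin N → Fin nx → ℝ)
    (hq' : ∀ j k, q' j k = ∫ ω in {ω | r' ω = j}, x' ω k ∂P)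
    (xbar' : Fin N → Fin nx → ℝ) (hxbar' : ∀ j, xbar' j = (ρ' j)⁻¹ • q' j)
    (S' : Fin N → Matrix (Fin nx) (Fin nx) ℝ)
    (hS' : ∀ j k l, S' j k l
      = ∫ ω in {ω | r' ω = j}, (x' ω k - xbar' j k) * (x' ω l - xbar' j l) ∂P) :
    ∀ j, S' j
      = ∑ i, p i j •
          (A i * Sc i * (A i)ᵀ + A i * Sc i * (K i)ᵀ * (B i)ᵀ
            + B i * K i * Sc i * (A i)ᵀ + B i * K i * Sc i * (K i)ᵀ * (B i)ᵀ
            + ρ i • (vecMulVec (A i *ᵥ xbar i + B i *ᵥ ubar i + c)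
                        (A i *ᵥ xbar i + B i *ᵥ ubar i + c)
                      + G i * (G i)ᵀ))
        - ρ' j • vecMulVec (xbar' j) (xbar' j) :=
  stmt_17_general P p x hx2 r r' hrmeas hr'meas ρ hρ hρpos q hq xbar hxbar Sc hSc w hw2 A B G K ubar
    c x' hx' hjoint hxjoint hxxjoint hwjoint hwxjoint hwwjoint ρ' hρ' hρ'pos q' hq' xbar' hxbar' S'
    hS'
end
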